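/- arXiv:1602.01791 — 3 statements merged into one kernel-verified Lean document; each statement's English description precedes it below -/
import Mathlib

section
/- Let R be a commutative ring, σ a type of variables, and x, y : σ two distinct variables. Let g be a multivariate polynomial in MvPolynomial σ R such that every exponent vector d in the support of g satisfies d(x) = 0 and d(y) = 0 (g involves neither x nor y). Let q ≥ 2 be a natural number. Then for every finitely supported exponent vector d : σ →₀ ℕ with d(x) = 0 and d(y) = 0, the coefficient of the monomial with exponent vector d + (q−2)·e_x + (q−2)·e_y (i.e. x^{q−2} y^{q−2} times the monomial of exponent d) in the polynomial (X_x · X_y − g)^{q−1} equals −(q−1) · (coefficient of d in g), where q−1 is taken as an element of R. -/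
/-!
Grade by the degree in `x`: `X x * X y` is homogeneous of degree `1` and `g` of degree `0`, so
in the binomial expansion of `(X x * X y - g) ^ (q - 1)` only the term
`(q - 1) • (X x * X y) ^ (q - 2) * (-g)` has `x`-degree `q - 2`.
-/

open MvPolynomial

namespace MvPolynomial

variable {R σ : Type*} [CommSemiring R] {w : σ → ℕ} {f g : MvPolynomial σ R}

theorem IsWeightedHomogeneous.coeff_add_pow (hf : IsWeightedHomogeneous w f 1)
    (hg : IsWeightedHomogeneous w g 0) (n : ℕ) {d : σ →₀ ℕ} {k : ℕ}
    (hd : Finsupp.weight w d = k) :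
    coeff d ((f + g) ^ n) = n.choose k * coeff d (f ^ k * g ^ (n - k)) := by
  have hterm (m : ℕ) :
      IsWeightedHomogeneous w (f ^ m * g ^ (n - m) * (n.choose m : MvPolynomial σ R)) m := by
    simpa using ((hf.pow m).mul (hg.pow (n - m))).mul (isWeightedHomogeneous_C w (n.choose m : R))
  rw [add_pow, coeff_sum, Finset.sum_eq_single k]
  · rw [← C_eq_coe_nat, mul_comm, coeff_C_mul]
  · exact fun m _ hmk => (hterm m).coeff_eq_zero d (hd.trans_ne (Ne.symm hmk))
  · intro hk
    rw [Nat.choose_eq_zero_of_lt (by simpa using hk), Nat.cast_zero, mul_zero, coeff_zero]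

end MvPolynomial

/-- The key coefficient computation behind Fedder's criterion for `xy = g`:
if `g` involves neither the variable `x` nor `y`, and `q ≥ 2`, then for any
exponent vector `d` with `d x = 0` and `d y = 0`, the coefficient of
`x^(q-2) y^(q-2) * (monomial d)` in `(X x * X y - g) ^ (q - 1)` equals
`-(q - 1) * (coefficient of d in g)`. -/
theorem coeff_pow_sub_xy
    {R : Type*} [CommRing R] {σ : Type*} {x y : σ} (hxy : x ≠ y)
    (g : MvPolynomial σ R)
    (hg : ∀ d ∈ g.support, d x = 0 ∧ d y = 0)
    (q : ℕ) (hq : 2 ≤ q) :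
    ∀ d : σ →₀ ℕ, d x = 0 → d y = 0 →
      coeff (d + Finsupp.single x (q - 2) + Finsupp.single y (q - 2))
          ((X x * X y - g) ^ (q - 1)) =
        -((q - 1 : ℕ) : R) * coeff d g := by
  classical
  obtain ⟨k, rfl⟩ := Nat.exists_eq_add_of_le' hq
  intro d hdx _
  let w : σ → ℕ := Pi.single x 1
  have hXY : IsWeightedHomogeneous w (X x * X y : MvPolynomial σ R) 1 := by
    simpa [w, hxy.symm] using (isWeightedHomogeneous_X R w x).mul (isWeightedHomogeneous_X R w y)
  have hg₀ : IsWeightedHomogeneous w (-g) 0 := by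
    refine IsWeightedHomogeneous.neg fun e he => ?_
    simpa [w, Finsupp.weight_single_one_apply] using (hg e (mem_support_iff.2 he)).1
  have hd : Finsupp.weight w (d + Finsupp.single x k + Finsupp.single y k) = k := by
    simp [w, Finsupp.weight_single_one_apply, hdx, hxy.symm]
  have hXY_pow : (X x * X y : MvPolynomial σ R) ^ k =
      monomial (Finsupp.single x k + Finsupp.single y k) 1 := by
    rw [mul_pow, X_pow_eq_monomial, X_pow_eq_monomial, monomial_mul, mul_one]
  rw [Nat.add_sub_cancel, show k + 2 - 1 = k + 1 from rfl, sub_eq_add_neg,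
    hXY.coeff_add_pow hg₀ _ hd, Nat.choose_succ_self_right, Nat.add_sub_cancel_left, pow_one,
    hXY_pow, add_assoc, add_comm d, coeff_monomial_mul, coeff_neg]
  push_cast
  ring
end

section
/- Let k be a field of prime characteristic p > 0, σ a type of variables, and x, y : σ two distinct variables. Let g ∈ MvPolynomial σ k be a polynomial such that every exponent vector in the support of g vanishes at x and at y. Suppose d₀ is an exponent vector in the support of g (so the coefficient of g at d₀ is nonzero), and let e ≥ 1 be an integer such that d₀(i) < p^e − 1 for every variable i. Then the polynomial (X_x · X_y − g)^{p^e − 1} does not belong to the ideal of MvPolynomial σ k generated by the p^e-th powers of the variables, {(X_i)^{p^e} : i ∈ σ}. -/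
/-!
Write `p ^ e = n + 2`. Because `g` does not involve `x`, in the binomial expansion of
`(X x * X y - g) ^ (n + 1)` the summand `(X x * X y) ^ j * (-g) ^ (n + 1 - j)` only has monomials
of `x`-degree `j`. Hence the coefficient of `X x ^ n * X y ^ n * t ^ d₀` is
`(n + 1) * (-coeff d₀ g) = coeff d₀ g ≠ 0`, as `n + 2 = 0` in `k`. All exponents of this
monomial are below `p ^ e`, whereas every monomial of an element of the ideal is divisible by
some `X i ^ p ^ e`.
-/

open MvPolynomial

namespace MvPolynomial

variable {R σ : Type*} [CommSemiring R]

theorem coeff_monomial_mul_eq_zero_of_notMem_vars {x : σ} {h : MvPolynomial σ R}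
    (hx : x ∉ h.vars) {d s : σ →₀ ℕ} (hds : d x ≠ s x) (r : R) :
    coeff d (monomial s r * h) = 0 := by
  classical
  rw [mul_comm, coeff_mul_monomial']
  split_ifs with hsd
  · by_contra hne
    refine hx ((mem_vars_iff_mem_support x).2
      ⟨d - s, mem_support_iff.2 (left_ne_zero_of_mul hne), ?_⟩)
    have := hsd x
    simp only [Finsupp.mem_support_iff, Finsupp.tsub_apply]
    omega
  · rfl

theorem X_mul_X_pow_eq_monomial (x y : σ) (n : ℕ) :
    (X x * X y : MvPolynomial σ R) ^ n =
      monomial (Finsupp.single x n + Finsupp.single y n) 1 := by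
  rw [mul_pow, X_pow_eq_monomial, X_pow_eq_monomial, monomial_mul, one_mul]

theorem coeff_X_mul_X_add_pow {x y : σ} (hxy : x ≠ y) {h : MvPolynomial σ R} (hx : x ∉ h.vars)
    (n : ℕ) (d : σ →₀ ℕ) :
    coeff d ((X x * X y + h) ^ n) =
      (n.choose (d x) : R) * coeff d ((X x * X y) ^ d x * h ^ (n - d x)) := by
  have hvars : ∀ m, x ∉ (h ^ m).vars := fun m hm => hx (vars_pow h m hm)
  rw [add_pow, coeff_sum, Finset.sum_eq_single (d x)]
  · rw [← Nat.cast_comm, ← map_natCast (C : R →+* MvPolynomial σ R), coeff_C_mul]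
  · intro j _ hj
    rw [← Nat.cast_comm, ← map_natCast (C : R →+* MvPolynomial σ R), coeff_C_mul,
      X_mul_X_pow_eq_monomial, coeff_monomial_mul_eq_zero_of_notMem_vars (hvars _) _ _, mul_zero]
    simpa [Finsupp.single_apply, hxy] using Ne.symm hj
  · intro hd
    rw [Nat.choose_eq_zero_of_lt (by simpa [Nat.lt_succ_iff] using hd), Nat.cast_zero, mul_zero,
      coeff_zero]

theorem coeff_single_add_single_add_X_mul_X_add_pow {x y : σ} (hxy : x ≠ y)
    {h : MvPolynomial σ R} (hx : x ∉ h.vars) (n a : ℕ) {m : σ →₀ ℕ} (hm : m x = 0) :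
    coeff (Finsupp.single x a + Finsupp.single y a + m) ((X x * X y + h) ^ n) =
      (n.choose a : R) * coeff m (h ^ (n - a)) := by
  have hdx : (Finsupp.single x a + Finsupp.single y a + m) x = a := by
    simp [hxy.symm, hm]
  rw [coeff_X_mul_X_add_pow hxy hx, hdx, X_mul_X_pow_eq_monomial, coeff_monomial_mul, one_mul]

theorem mem_ideal_span_X_pow_iff {f : MvPolynomial σ R} {q : ℕ} :
    f ∈ Ideal.span (Set.range fun i => (X i : MvPolynomial σ R) ^ q) ↔
      ∀ d ∈ f.support, ∃ i, q ≤ d i := by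
  have hrange : (Set.range fun i => (X i : MvPolynomial σ R) ^ q) =
      (fun s => monomial s (1 : R)) '' Set.range fun i => Finsupp.single i q := by
    simp_rw [X_pow_eq_monomial, ← Set.range_comp]
    rfl
  simp [hrange, mem_ideal_span_monomial_image, Finsupp.single_le_iff]

end MvPolynomial

theorem pow_sub_xy_not_mem_frobenius_power_general
    {k : Type*} [Field k] {p : ℕ} [CharP k p]
    {σ : Type*} {x y : σ} (hxy : x ≠ y)
    (g : MvPolynomial σ k)
    (hg : ∀ d ∈ g.support, d x = 0 ∧ d y = 0)
    (d₀ : σ →₀ ℕ) (hd₀ : d₀ ∈ g.support)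
    (e : ℕ) (hd₀small : ∀ i : σ, d₀ i < p ^ e - 1) :
    (X x * X y - g) ^ (p ^ e - 1) ∉
      Ideal.span (Set.range fun i : σ => (X i : MvPolynomial σ k) ^ p ^ e) := by
  obtain ⟨n, hn⟩ : ∃ n, p ^ e = n + 2 := ⟨p ^ e - 2, by have := hd₀small x; omega⟩
  have hn0 : (n + 2 : k) = 0 := by
    have he : e ≠ 0 := by rintro rfl; simp at hn
    exact_mod_cast (by simp [← hn, he] : ((n + 2 : ℕ) : k) = 0)
  have hgx : x ∉ (-g).vars := by
    rw [vars_neg, mem_vars_iff_mem_support]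
    rintro ⟨d, hd, hxd⟩
    exact Finsupp.mem_support_iff.1 hxd (hg d hd).1
  obtain ⟨hd₀x, hd₀y⟩ := hg d₀ hd₀
  have hcoeff :
      coeff (Finsupp.single x n + Finsupp.single y n + d₀) ((X x * X y - g) ^ (n + 1)) =
        coeff d₀ g := by
    rw [sub_eq_add_neg, coeff_single_add_single_add_X_mul_X_add_pow hxy hgx _ _ hd₀x,
      Nat.choose_succ_self_right, Nat.add_sub_cancel_left, pow_one, coeff_neg, Nat.cast_succ]
    linear_combination (-coeff d₀ g) * hn0
  set d := Finsupp.single x n + Finsupp.single y n + d₀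
  have hd : d ∈ ((X x * X y - g) ^ (n + 1)).support :=
    mem_support_iff.2 (hcoeff ▸ mem_support_iff.1 hd₀)
  have hdn : ∀ i, d i < n + 2 := by
    intro i
    have := hd₀small i
    rcases eq_or_ne i x with rfl | hix
    · simp [d, hxy, hd₀x]
    rcases eq_or_ne i y with rfl | hiy
    · simp [d, hxy.symm, hd₀y]
    · simp [d, hix.symm, hiy.symm]
      omega
  rw [hn, Nat.add_succ_sub_one, mem_ideal_span_X_pow_iff]
  intro hmem
  obtain ⟨i, hi⟩ := hmem d hd
  exact (hdn i).not_ge hi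

/-- Fedder-criterion claim from the paper: over a field `k` of characteristic `p > 0`,
if `g` involves neither `x` nor `y`, and some exponent vector `d₀` in the support of
`g` satisfies `d₀ i < p^e - 1` for all variables `i` (with `e ≥ 1`), then
`(X x * X y - g) ^ (p^e - 1)` is not in the ideal generated by the `p^e`-th powers of
the variables. -/
theorem pow_sub_xy_not_mem_frobenius_power
    {k : Type*} [Field k] {p : ℕ} (hp : p.Prime) [CharP k p]
    {σ : Type*} {x y : σ} (hxy : x ≠ y)
    (g : MvPolynomial σ k)
    (hg : ∀ d ∈ g.support, d x = 0 ∧ d y = 0)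
    (d₀ : σ →₀ ℕ) (hd₀ : d₀ ∈ g.support)
    (e : ℕ) (he : 1 ≤ e) (hd₀small : ∀ i : σ, d₀ i < p ^ e - 1) :
    (X x * X y - g) ^ (p ^ e - 1) ∉
      Ideal.span (Set.range fun i : σ => (X i : MvPolynomial σ k) ^ p ^ e) :=
  pow_sub_xy_not_mem_frobenius_power_general hxy g hg d₀ hd₀ e hd₀small
end

section
/- Let k be an algebraically closed field of prime characteristic p, and let V be a nonzero finite-dimensional k-vector space. Let φ : V → V be a bijective additive map that is p-linear, i.e. φ(c • v) = c^p • φ(v) for all c ∈ k and v ∈ V. Then there exists a k-linear subspace U ⊆ V with φ(U) = U (as sets) such that the quotient V/U is one-dimensional over k; in particular φ descends to a bijective p-linear map on the one-dimensional quotient V/U. -/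
/-!
Dualizing reduces the theorem to fixed points: `ξ ↦ (ξ ∘ φ⁻¹) ^ p` is an injective `p`-linear map
of the dual space, and a nonzero functional with `ξ (φ x) = ξ x ^ p` has a `φ`-stable kernel of
codimension one.

An injective `p`-linear map `φ` has a nonzero fixed vector. For `v ≠ 0` take the first linear
relation `φ^[n+1] v = ∑ bᵢ • φ^[i] v` among the iterates; injectivity forces `b₀ ≠ 0`. The vector
`∑ cᵢ • φ^[i] v` is fixed iff `c₀ = b₀ t ^ p` and `cᵢ₊₁ = cᵢ ^ p + bᵢ₊₁ t ^ p` with `t = cₙ`, so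
`cₙ = q(t)` for a polynomial `q` of degree `p ^ (n+1)` divisible by `X ^ 2`, and `q(t) = t` has a
nonzero solution because `k` is algebraically closed.
-/

open Polynomial Module Function

def fixedPointCoeff {R : Type*} [CommSemiring R] (p : ℕ) (b : ℕ → R) (t : R) : ℕ → R
  | 0 => b 0 * t ^ p
  | i + 1 => fixedPointCoeff p b t i ^ p + b (i + 1) * t ^ p

variable {p : ℕ}

section
variable {R S : Type*} [CommSemiring R] [CommSemiring S]

theorem map_fixedPointCoeff (f : R →+* S) (b : ℕ → R) (t : R) (i : ℕ) :
    f (fixedPointCoeff p b t i) = fixedPointCoeff p (f ∘ b) (f t) i := by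
  induction i with
  | zero => simp [fixedPointCoeff]
  | succ i ih => simp [fixedPointCoeff, ih]

theorem X_sq_dvd_fixedPointCoeff (hp : 2 ≤ p) (b : ℕ → R) (i : ℕ) :
    (X : R[X]) ^ 2 ∣ fixedPointCoeff p (C ∘ b) X i := by
  have hXp : (X : R[X]) ^ 2 ∣ X ^ p := pow_dvd_pow X hp
  induction i with
  | zero => exact hXp.mul_left _
  | succ i ih => exact dvd_add (ih.trans (dvd_pow_self _ (by omega))) (hXp.mul_left _)

theorem natDegree_fixedPointCoeff [NoZeroDivisors R] (hp : 2 ≤ p) {b : ℕ → R} (hb : b 0 ≠ 0)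
    (i : ℕ) : (fixedPointCoeff p (C ∘ b) X i).natDegree = p ^ (i + 1) := by
  induction i with
  | zero => simp [fixedPointCoeff, natDegree_C_mul_X_pow _ _ hb]
  | succ i ih =>
    have hpow : (fixedPointCoeff p (C ∘ b) X i ^ p).natDegree = p ^ (i + 2) := by
      rw [natDegree_pow, ih, ← pow_succ']
    have hlt : (C (b (i + 1)) * X ^ p).natDegree < p ^ (i + 2) :=
      (natDegree_C_mul_X_pow_le _ _).trans_lt
        (lt_of_eq_of_lt (pow_one p).symm (Nat.pow_lt_pow_right hp (by omega)))
    rw [fixedPointCoeff, natDegree_add_eq_left_of_natDegree_lt (hpow ▸ hlt), hpow]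

end

theorem exists_fixedPointCoeff_eq_self {K : Type*} [Field K] [IsAlgClosed K] (hp : 2 ≤ p)
    {b : ℕ → K} (hb : b 0 ≠ 0) (n : ℕ) : ∃ t ≠ 0, fixedPointCoeff p b t n = t := by
  -- `q = X ^ 2 * s`, so every root of `X * s - 1` is a nonzero solution of `q(t) = t`
  obtain ⟨s, hs⟩ := X_sq_dvd_fixedPointCoeff hp b n
  have hs0 : s ≠ 0 := by
    rintro rfl
    have hdeg := natDegree_fixedPointCoeff hp hb n
    rw [hs, mul_zero, natDegree_zero] at hdeg
    exact (pow_pos (by omega) _).ne hdeg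
  have hdeg : (X * s - 1).degree ≠ 0 := by
    have hXs : (X * s).degree = ((1 + s.natDegree : ℕ) : WithBot ℕ) := by
      rw [degree_mul, degree_X, degree_eq_natDegree hs0]; norm_cast
    rw [degree_sub_eq_left_of_degree_lt] <;> rw [hXs]
    · norm_cast; omega
    · rw [degree_one]; norm_cast; omega
  obtain ⟨t, ht⟩ := IsAlgClosed.exists_root _ hdeg
  have hts : t * s.eval t = 1 := by simpa [sub_eq_zero] using ht
  refine ⟨t, left_ne_zero_of_mul_eq_one hts, ?_⟩
  have hqt := congrArg (Polynomial.eval t) hs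
  rw [← coe_evalRingHom, map_fixedPointCoeff] at hqt
  simp only [coe_evalRingHom, Function.comp_def, eval_C, eval_X, eval_mul, eval_pow] at hqt
  rw [hqt, sq, mul_assoc, hts, mul_one]

theorem exists_linearIndepOn_range_and_mem_span {K V : Type*} [DivisionRing K] [AddCommGroup V]
    [Module K V] [FiniteDimensional K V] (u : ℕ → V) :
    ∃ m, LinearIndepOn K u (Finset.range m : Set ℕ) ∧
      u m ∈ Submodule.span K (u '' (Finset.range m : Set ℕ)) := by
  classical
  have hdep : ∃ m, ¬ LinearIndepOn K u (Finset.range m : Set ℕ) :=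
    ⟨finrank K V + 1, fun h => by simpa using h.fintype_card_le_finrank⟩
  obtain ⟨m, hm⟩ : ∃ m, Nat.find hdep = m + 1 :=
    Nat.exists_eq_succ_of_ne_zero fun h => Nat.find_spec hdep (by rw [h]; simp)
  have hind : LinearIndepOn K u (Finset.range m : Set ℕ) :=
    not_not.mp (Nat.find_min hdep (by omega))
  have hnot := Nat.find_spec hdep
  rw [hm, Finset.range_add_one, Finset.coe_insert, linearIndepOn_insert (by simp)] at hnot
  exact ⟨m, hind, not_not.mp fun h => hnot ⟨hind, h⟩⟩

section FrobeniusSemilinear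
variable {k V : Type*} [Field k] [ExpChar k p] [AddCommGroup V] [Module k V]
  (φ : V →ₛₗ[frobenius k p] V)

theorem coeff_zero_ne_zero_of_iterate_eq_sum [PerfectRing k p] (hφ : Injective φ) {v : V} {n : ℕ}
    (hind : LinearIndepOn k (fun i => φ^[i] v) (Finset.range (n + 1) : Set ℕ)) {b : ℕ → k}
    (hb : φ^[n + 1] v = ∑ i ∈ Finset.range (n + 1), b i • φ^[i] v) : b 0 ≠ 0 := by
  intro hb0
  have hn : φ^[n] v = ∑ i ∈ Finset.range n, (frobeniusEquiv k p).symm (b (i + 1)) • φ^[i] v := by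
    apply hφ
    rw [← iterate_succ_apply' φ, hb, Finset.sum_range_succ', hb0, zero_smul, add_zero, map_sum]
    simp only [map_smulₛₗ, frobenius_apply_frobeniusEquiv_symm, iterate_succ_apply']
  rw [Finset.range_add_one, Finset.coe_insert, linearIndepOn_insert (by simp)] at hind
  exact hind.2 ((Submodule.mem_span_image_finset_iff_exists_fun' k).mpr ⟨_, hn.symm⟩)

theorem apply_sum_fixedPointCoeff_smul_iterate {v : V} {n : ℕ} {b : ℕ → k}
    (hb : φ^[n + 1] v = ∑ i ∈ Finset.range (n + 1), b i • φ^[i] v) {t : k}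
    (ht : fixedPointCoeff p b t n = t) :
    φ (∑ i ∈ Finset.range (n + 1), fixedPointCoeff p b t i • φ^[i] v) =
      ∑ i ∈ Finset.range (n + 1), fixedPointCoeff p b t i • φ^[i] v := by
  calc φ (∑ i ∈ Finset.range (n + 1), fixedPointCoeff p b t i • φ^[i] v)
      = ∑ i ∈ Finset.range n, fixedPointCoeff p b t i ^ p • φ^[i + 1] v + t ^ p • φ^[n + 1] v := by
        simp only [map_sum, map_smulₛₗ, frobenius_def, ← iterate_succ_apply' φ]
        rw [Finset.sum_range_succ, ht]
    _ = ∑ i ∈ Finset.range n, fixedPointCoeff p b t (i + 1) • φ^[i + 1] v +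
          fixedPointCoeff p b t 0 • φ^[0] v := by
        rw [hb, Finset.sum_range_succ', smul_add, Finset.smul_sum]
        simp only [fixedPointCoeff, add_smul, smul_smul, Finset.sum_add_distrib, mul_comm (t ^ p)]
        abel
    _ = _ := (Finset.sum_range_succ' (fun i => fixedPointCoeff p b t i • φ^[i] v) n).symm

theorem exists_ne_zero_apply_eq_self [IsAlgClosed k] [FiniteDimensional k V] [Nontrivial V]
    (hp : p.Prime) (hφ : Injective φ) : ∃ w ≠ 0, φ w = w := by
  obtain ⟨v, hv⟩ := exists_ne (0 : V)
  obtain ⟨m, hind, hspan⟩ := exists_linearIndepOn_range_and_mem_span (K := k) (fun i => φ^[i] v)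
  obtain ⟨n, rfl⟩ : ∃ n, m = n + 1 := Nat.exists_eq_succ_of_ne_zero <| by
    rintro rfl
    simp [hv] at hspan
  obtain ⟨b, hb⟩ : ∃ b : ℕ → k, φ^[n + 1] v = ∑ i ∈ Finset.range (n + 1), b i • φ^[i] v := by
    obtain ⟨b, hb⟩ := (Submodule.mem_span_image_finset_iff_exists_fun' k).mp hspan
    exact ⟨b, hb.symm⟩
  have hb0 := coeff_zero_ne_zero_of_iterate_eq_sum φ hφ hind hb
  obtain ⟨t, ht0, ht⟩ := exists_fixedPointCoeff_eq_self hp.two_le hb0 n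
  refine ⟨_, fun h => ?_, apply_sum_fixedPointCoeff_smul_iterate φ hb ht⟩
  have hc0 := linearIndepOn_iff'.mp hind _ _ subset_rfl h 0 (by simp)
  exact mul_ne_zero hb0 (pow_ne_zero _ ht0) hc0

section Dual

variable [PerfectRing k p] (hφ : Bijective φ)

theorem ofBijective_symm_smul (c : k) (x : V) :
    (AddEquiv.ofBijective φ hφ).symm (c • x) =
      (frobeniusEquiv k p).symm c • (AddEquiv.ofBijective φ hφ).symm x := by
  have hinv (y : V) : φ ((AddEquiv.ofBijective φ hφ).symm y) = y :=
    (AddEquiv.ofBijective φ hφ).apply_symm_apply y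
  apply hφ.injective
  rw [map_smulₛₗ φ, frobenius_apply_frobeniusEquiv_symm, hinv, hinv]

/-- `ξ ↦ (ξ ∘ φ⁻¹) ^ p`; its fixed points are the functionals with `ξ ∘ φ = ξ ^ p`. -/
noncomputable def frobeniusDualMap : Dual k V →ₛₗ[frobenius k p] Dual k V where
  toFun ξ :=
    { toFun x := ξ ((AddEquiv.ofBijective φ hφ).symm x) ^ p
      map_add' x y := by simp only [map_add, add_pow_expChar]
      map_smul' c x := by
        simp only [ofBijective_symm_smul, map_smul, smul_eq_mul, mul_pow,
          frobeniusEquiv_symm_pow_p, RingHom.id_apply] }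
  map_add' ξ η := by ext x; simp [add_pow_expChar]
  map_smul' c ξ := by ext x; simp [mul_pow, frobenius_def]

theorem frobeniusDualMap_apply (ξ : Dual k V) (x : V) :
    frobeniusDualMap φ hφ ξ (φ x) = ξ x ^ p :=
  congrArg (ξ · ^ p) ((AddEquiv.ofBijective φ hφ).symm_apply_apply x)

theorem frobeniusDualMap_injective : Injective (frobeniusDualMap φ hφ) := by
  intro ξ η h
  ext x
  apply frobenius_inj k p
  simpa [frobenius_def, frobeniusDualMap_apply] using LinearMap.congr_fun h (φ x)

end Dual

theorem exists_dual_ne_zero_apply_eq_pow [IsAlgClosed k] [FiniteDimensional k V] [Nontrivial V]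
    (hp : p.Prime) (hφ : Bijective φ) : ∃ ξ : Dual k V, ξ ≠ 0 ∧ ∀ x, ξ (φ x) = ξ x ^ p := by
  obtain ⟨ξ, hξ, hfix⟩ :=
    exists_ne_zero_apply_eq_self _ hp (frobeniusDualMap_injective φ hφ)
  exact ⟨ξ, hξ, fun x => by rw [← frobeniusDualMap_apply φ hφ, hfix]⟩

theorem image_ker_eq_of_apply_eq_pow (hφ : Surjective φ) {ξ : Dual k V}
    (hξ : ∀ x, ξ (φ x) = ξ x ^ p) : φ '' (LinearMap.ker ξ : Set V) = LinearMap.ker ξ := by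
  ext x
  obtain ⟨y, rfl⟩ := hφ x
  have hp : p ≠ 0 := expChar_ne_zero k p
  simp only [Set.mem_image, SetLike.mem_coe, LinearMap.mem_ker, hξ, pow_eq_zero_iff hp]
  refine ⟨fun ⟨z, hz, hzy⟩ => ?_, fun hy => ⟨y, hy, rfl⟩⟩
  have hξy := congrArg ξ hzy
  rwa [hξ, hξ, hz, zero_pow hp, eq_comm, pow_eq_zero_iff hp] at hξy

end FrobeniusSemilinear

theorem Module.Dual.finrank_quotient_ker_eq_one {K V : Type*} [DivisionRing K] [AddCommGroup V]
    [Module K V] {ξ : Dual K V} (hξ : ξ ≠ 0) : finrank K (V ⧸ LinearMap.ker ξ) = 1 :=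
  (ξ.quotKerEquivOfSurjective (LinearMap.surjective hξ)).finrank_eq.trans (finrank_self K)

/-- Over an algebraically closed field `k` of characteristic `p`, any nonzero
finite-dimensional `k`-vector space with a bijective `p`-linear endomorphism `φ`
admits a `φ`-stable subspace `U` (with `φ(U) = U`) whose quotient is
one-dimensional; thus `φ` descends to a bijective `p`-linear map on `V ⧸ U`. -/
theorem exists_one_dim_quotient_of_pLinear
    {k : Type*} [Field k] [IsAlgClosed k] {p : ℕ} (hp : p.Prime) [CharP k p]
    {V : Type*} [AddCommGroup V] [Module k V] [FiniteDimensional k V]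
    (hV : Nontrivial V)
    (φ : V → V) (hbij : Function.Bijective φ)
    (hadd : ∀ v w : V, φ (v + w) = φ v + φ w)
    (hsemi : ∀ (c : k) (v : V), φ (c • v) = c ^ p • φ v) :
    ∃ U : Submodule k V, φ '' (U : Set V) = (U : Set V) ∧
      Module.finrank k (V ⧸ U) = 1 := by
  have : ExpChar k p := ExpChar.prime hp
  let φₛₗ : V →ₛₗ[frobenius k p] V := { toFun := φ, map_add' := hadd, map_smul' := hsemi }
  obtain ⟨ξ, hξ0, hξ⟩ := exists_dual_ne_zero_apply_eq_pow φₛₗ hp hbij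
  exact ⟨LinearMap.ker ξ, image_ker_eq_of_apply_eq_pow φₛₗ hbij.surjective hξ,
    Dual.finrank_quotient_ker_eq_one hξ0⟩
end
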